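/- arXiv:0906.1019 — 8 statements merged into one kernel-verified Lean document; each statement's English description precedes it below -/
import Mathlib

section
/- Let D be a continuous probability distribution on [0,∞) with cdf F, pdf f, and monotone (non-decreasing) hazard rate h(x) = f(x)/(1-F(x)). If r > 0 satisfies h(r) = 1/r (the reserve price), then F(r) ≤ 1 - 1/e. -/
/-!
Since `h` is non-decreasing, the cumulative hazard up to the reserve price is at most
`r * h r = 1`; hence `1 - F r = exp (-∫₀ʳ h) ≥ exp (-1)`.
-/

open Real MeasureTheory

theorem MonotoneOn.intervalIntegral_le_mul_right {h : ℝ → ℝ} {a b : ℝ} (hab : a ≤ b)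
    (hmono : MonotoneOn h (Set.Icc a b)) :
    ∫ t in a..b, h t ≤ (b - a) * h b := by
  have hint : IntervalIntegrable h volume a b :=
    (hmono.mono (Set.uIcc_of_le hab).subset).intervalIntegrable
  calc ∫ t in a..b, h t ≤ ∫ _ in a..b, h b :=
        intervalIntegral.integral_mono_on hab hint intervalIntegrable_const
          fun x hx => hmono hx ⟨hab, le_rfl⟩ hx.2
    _ = (b - a) * h b := by rw [intervalIntegral.integral_const, smul_eq_mul]

theorem integral_hazard_le_one_of_reserve {h : ℝ → ℝ} (hmono : MonotoneOn h (Set.Ici 0))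
    {r : ℝ} (hr : 0 < r) (hres : h r = 1 / r) :
    ∫ t in (0 : ℝ)..r, h t ≤ 1 :=
  calc ∫ t in (0 : ℝ)..r, h t ≤ (r - 0) * h r :=
        (hmono.mono Set.Icc_subset_Ici_self).intervalIntegral_le_mul_right hr.le
    _ = 1 := by rw [hres, sub_zero, mul_one_div_cancel hr.ne']

theorem stmt_0_general (F h : ℝ → ℝ)
    (hmono : MonotoneOn h (Set.Ici 0))
    (hF : ∀ x ∈ Set.Ici (0:ℝ), F x = 1 - Real.exp (-∫ t in (0:ℝ)..x, h t))
    (r : ℝ) (hr : 0 < r) (hres : h r = 1 / r) :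
    F r ≤ 1 - 1 / Real.exp 1 := by
  have hH := integral_hazard_le_one_of_reserve hmono hr hres
  have hsurv : exp (-1) ≤ exp (-∫ t in (0:ℝ)..r, h t) := exp_le_exp.2 (neg_le_neg hH)
  rw [hF r hr.le, one_div, ← exp_neg]
  linarith

/-- An MHR distribution's cdf at the reserve price is at most `1 - 1/e`. -/
theorem stmt_0 (f F h : ℝ → ℝ)
    (hmono : MonotoneOn h (Set.Ici 0))
    (hhaz : ∀ x ∈ Set.Ici (0:ℝ), h x = f x / (1 - F x))
    (hF : ∀ x ∈ Set.Ici (0:ℝ), F x = 1 - Real.exp (-∫ t in (0:ℝ)..x, h t))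
    (hint : ∀ x : ℝ, IntervalIntegrable h volume 0 x)
    (r : ℝ) (hr : 0 < r) (hres : h r = 1 / r) :
    F r ≤ 1 - 1 / Real.exp 1 :=
  stmt_0_general F h hmono hF r hr hres
end

section
/- Let h : [0,r] → [0,∞) be non-decreasing with h(r) = 1/r, and define F(y) = 1 - exp(-∫_0^y h(z) dz). Suppose F(r) = φ where φ ∈ [0, 1-1/e]. Let t = r(1 + ln(1-φ)) and define G(y) = 0 for y ∈ [0,t) and G(y) = 1 - exp(-(y-t)/r) for y ∈ [t,r]. Then F(y) ≥ G(y) for all y ∈ [0,r]. -/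
open Real MeasureTheory Set intervalIntegral

/-!
Write `H y = ∫₀^y h` for the cumulative hazard, so `F = 1 - exp (-H)` and `G = 1 - exp (-H_G)`
with `H_G y = max 0 ((y - t) / r)`. Both hazards have the same total `-log (1 - φ)` on `[0, r]`,
and on `[y, r]` monotonicity bounds `h` by `h r = 1 / r`, the hazard of `G` there. Hence `F` can
lose at most `(r - y) / r` of cumulative hazard between `y` and `r`, which gives `H_G ≤ H` on
`[0, r]`.
-/

theorem MonotoneOn.integral_le_sub_mul_right {h : ℝ → ℝ} {a b : ℝ} (hab : a ≤ b)
    (hmono : MonotoneOn h (Icc a b)) : ∫ z in a..b, h z ≤ (b - a) * h b := by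
  have hint : IntervalIntegrable h volume a b :=
    MonotoneOn.intervalIntegrable (by rwa [uIcc_of_le hab])
  calc ∫ z in a..b, h z ≤ ∫ _ in a..b, h b :=
        integral_mono_on hab hint intervalIntegrable_const
          fun z hz => hmono hz ⟨hab, le_rfl⟩ hz.2
    _ = (b - a) * h b := by simp

theorem MonotoneOn.integral_sub_mul_le_integral {h : ℝ → ℝ} {a y b : ℝ} (hay : a ≤ y)
    (hyb : y ≤ b) (hmono : MonotoneOn h (Icc a b)) :
    (∫ z in a..b, h z) - (b - y) * h b ≤ ∫ z in a..y, h z := by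
  have hint : ∀ c d, a ≤ c → c ≤ d → d ≤ b → IntervalIntegrable h volume c d :=
    fun c d hac hcd hdb => MonotoneOn.intervalIntegrable <| hmono.mono <| by
      rw [uIcc_of_le hcd]; exact Icc_subset_Icc hac hdb
  rw [← integral_add_adjacent_intervals (hint a y le_rfl hay hyb) (hint y b hay hyb le_rfl)]
  linarith [(hmono.mono (Icc_subset_Icc_left hay)).integral_le_sub_mul_right hyb]

theorem stmt_2_general (r φ t : ℝ) (hr : 0 < r)
    (h F G : ℝ → ℝ)
    (hmono : MonotoneOn h (Set.Icc 0 r))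
    (hnn : ∀ x ∈ Set.Icc 0 r, 0 ≤ h x)
    (hres : h r = 1 / r)
    (hF : ∀ y ∈ Set.Icc 0 r, F y = 1 - Real.exp (-∫ z in (0:ℝ)..y, h z))
    (hφ : F r = φ)
    (ht : t = r * (1 + Real.log (1 - φ)))
    (hG : ∀ y, G y = if y < t then 0 else 1 - Real.exp (-(y - t) / r)) :
    ∀ y ∈ Set.Icc 0 r, G y ≤ F y := by
  intro y hy
  have hHr : ∫ z in (0:ℝ)..r, h z = -log (1 - φ) := by
    rw [← hφ, hF r ⟨hr.le, le_rfl⟩, sub_sub_cancel, log_exp, neg_neg]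
  have hH_nonneg : 0 ≤ ∫ z in (0:ℝ)..y, h z :=
    integral_nonneg hy.1 fun z hz => hnn z ⟨hz.1, hz.2.trans hy.2⟩
  have hH_lower : (y - t) / r ≤ ∫ z in (0:ℝ)..y, h z := by
    have := hmono.integral_sub_mul_le_integral hy.1 hy.2
    rw [hHr, hres] at this
    convert this using 1
    rw [ht]
    field_simp
    ring
  have hmono_cdf : ∀ c ≤ ∫ z in (0:ℝ)..y, h z,
      1 - exp (-c) ≤ 1 - exp (-∫ z in (0:ℝ)..y, h z) := fun c hc => by gcongr
  rw [hF y hy, hG y]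
  split_ifs
  · simpa using hmono_cdf 0 hH_nonneg
  · rw [neg_div]
    exact hmono_cdf _ hH_lower

/-- Any MHR cdf `F` with reserve price `r` and `F r = φ` dominates the extremal
cdf `G_{φ,r}` pointwise on `[0,r]`. -/
theorem stmt_2 (r φ t : ℝ) (hr : 0 < r)
    (hφmem : φ ∈ Set.Icc 0 (1 - 1 / Real.exp 1))
    (h F G : ℝ → ℝ)
    (hmono : MonotoneOn h (Set.Icc 0 r))
    (hnn : ∀ x ∈ Set.Icc 0 r, 0 ≤ h x)
    (hres : h r = 1 / r)
    (hint : IntervalIntegrable h volume 0 r)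
    (hF : ∀ y ∈ Set.Icc 0 r, F y = 1 - Real.exp (-∫ z in (0:ℝ)..y, h z))
    (hφ : F r = φ)
    (ht : t = r * (1 + Real.log (1 - φ)))
    (hG : ∀ y, G y = if y < t then 0 else 1 - Real.exp (-(y - t) / r)) :
    ∀ y ∈ Set.Icc 0 r, G y ≤ F y :=
  stmt_2_general r φ t hr h F G hmono hnn hres hF hφ ht hG
end

section
/- Fix r > 0, φ ∈ [0, 1-1/e), and integer k ≥ 1. Let t = r(1 + ln(1-φ)) and let G(x) = 1 - e^{-(x-t)/r} for x ∈ [t,r], G(x) = 0 for x ∈ [0,t). Then ∫_0^r x d(G^k)(x) = r·(φ^k + ln(1-φ) + Σ_{i=1}^{k} φ^i / i). -/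
open Real MeasureTheory Set

/-! On `[t, r]` the cdf `G` agrees with `g x = 1 - exp (-(x - t) / r)`, which solves
`g' = (1 - g) / r`, and below `t` it vanishes. Hence `x (G^k)'` is the indicator of `(t, ∞)`
times `x (g^k)'`, and an antiderivative of `x (g^k)'` is
`x g^k - x + r ∑_{i<k} g^(i+1) / (i+1)`: the derivative of the sum is
`∑_{i<k} g^i (1 - g) = 1 - g^k` by the geometric series. Finally `g t = 0` and `g r = φ`. -/

lemma intervalIntegral_indicator_Ioi {a b t : ℝ} (hat : a ≤ t) (htb : t ≤ b) (f : ℝ → ℝ) :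
    ∫ x in a..b, (Ioi t).indicator f x = ∫ x in t..b, f x := by
  rw [intervalIntegral.integral_of_le (hat.trans htb), intervalIntegral.integral_of_le htb,
    setIntegral_indicator measurableSet_Ioi, Ioc_inter_Ioi, max_eq_right hat]

lemma deriv_eq_indicator_of_eqOn {F F₀ : ℝ → ℝ} {t c x : ℝ} (hleft : EqOn F (fun _ ↦ c) (Iio t))
    (hright : EqOn F F₀ (Ioi t)) (hx : x ≠ t) :
    deriv F x = (Ioi t).indicator (deriv F₀) x := by
  rcases hx.lt_or_gt with hlt | hgt
  · have : F =ᶠ[nhds x] fun _ ↦ c := Filter.eventually_of_mem (Iio_mem_nhds hlt) hleft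
    rw [this.deriv_eq, deriv_const, indicator_of_notMem (notMem_Ioi.mpr hlt.le)]
  · have : F =ᶠ[nhds x] F₀ := Filter.eventually_of_mem (Ioi_mem_nhds hgt) hright
    rw [this.deriv_eq, indicator_of_mem (mem_Ioi.mpr hgt)]

section ExpODE

variable {g : ℝ → ℝ} {r : ℝ}

lemma hasDerivAt_mul_sum_pow_div (hr : r ≠ 0) {x : ℝ} (hg : HasDerivAt g ((1 - g x) / r) x)
    (k : ℕ) :
    HasDerivAt (fun y ↦ r * ∑ i ∈ Finset.range k, g y ^ (i + 1) / ((i : ℝ) + 1))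
      (1 - g x ^ k) x := by
  have hsum : HasDerivAt (fun y ↦ ∑ i ∈ Finset.range k, g y ^ (i + 1) / ((i : ℝ) + 1))
      (∑ i ∈ Finset.range k, g x ^ i * ((1 - g x) / r)) x := by
    refine HasDerivAt.fun_sum fun i _ ↦ ((hg.fun_pow (i + 1)).div_const _).congr_deriv ?_
    push_cast
    field_simp
  refine (hsum.const_mul r).congr_deriv ?_
  rw [← Finset.sum_mul, ← mul_div_assoc, mul_div_cancel₀ _ hr, geom_sum_mul_neg]

lemma hasDerivAt_antideriv_mul_deriv_pow (hr : r ≠ 0) {x d : ℝ}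
    (hg : HasDerivAt g ((1 - g x) / r) x) {k : ℕ} (hd : HasDerivAt (fun y ↦ g y ^ k) d x) :
    HasDerivAt (fun y ↦ y * g y ^ k - y + r * ∑ i ∈ Finset.range k, g y ^ (i + 1) / ((i : ℝ) + 1))
      (x * d) x :=
  ((((hasDerivAt_id' x).mul hd).sub (hasDerivAt_id' x)).add
    (hasDerivAt_mul_sum_pow_div hr hg k)).congr_deriv (by ring)

lemma integral_mul_deriv_pow_of_hasDerivAt (hr : r ≠ 0)
    (hg : ∀ x, HasDerivAt g ((1 - g x) / r) x) (k : ℕ) (a b : ℝ) :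
    ∫ x in a..b, x * deriv (fun y ↦ g y ^ k) x
      = (b * g b ^ k - b + r * ∑ i ∈ Finset.range k, g b ^ (i + 1) / ((i : ℝ) + 1))
        - (a * g a ^ k - a + r * ∑ i ∈ Finset.range k, g a ^ (i + 1) / ((i : ℝ) + 1)) := by
  have hpow : ∀ x, HasDerivAt (fun y ↦ g y ^ k) (k * g x ^ (k - 1) * ((1 - g x) / r)) x :=
    fun x ↦ (hg x).fun_pow k
  have hcont : Continuous g := continuous_iff_continuousAt.mpr fun x ↦ (hg x).continuousAt
  have hderiv : deriv (fun y ↦ g y ^ k) = fun x ↦ k * g x ^ (k - 1) * ((1 - g x) / r) :=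
    funext fun x ↦ (hpow x).deriv
  refine intervalIntegral.integral_eq_sub_of_hasDerivAt
    (fun x _ ↦ hasDerivAt_antideriv_mul_deriv_pow hr (hg x) (hpow x).differentiableAt.hasDerivAt)
    (Continuous.intervalIntegrable ?_ a b)
  rw [hderiv]
  fun_prop

end ExpODE

lemma hasDerivAt_one_sub_exp (t r x : ℝ) :
    HasDerivAt (fun y ↦ 1 - exp (-(y - t) / r)) ((1 - (1 - exp (-(x - t) / r))) / r) x := by
  have h : HasDerivAt (fun y ↦ -(y - t) / r) (-1 / r) x := by
    simpa using (((hasDerivAt_id' x).sub_const t).neg).div_const r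
  exact (h.exp.const_sub 1).congr_deriv (by ring)

lemma mul_one_add_log_one_sub_mem_Icc {r φ : ℝ} (hr : 0 < r)
    (hφ : φ ∈ Ico 0 (1 - 1 / exp 1)) : r * (1 + log (1 - φ)) ∈ Icc 0 r := by
  obtain ⟨hφ0, hφ1⟩ := hφ
  have h1φ : 0 < 1 - φ := by linarith [one_div_pos.mpr (exp_pos 1)]
  have hlog_gt : -1 < log (1 - φ) := by
    rw [lt_log_iff_exp_lt h1φ, exp_neg, inv_eq_one_div]
    linarith
  have hlog_le := log_nonpos h1φ.le (by linarith)
  constructor <;> nlinarith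

/-- The truncated expected maximum of `k` i.i.d. draws from the extremal cdf
`G_{φ,r}` equals `r(φ^k + ln(1-φ) + Σ_{i=1}^k φ^i/i)`. -/
theorem stmt_6 (r φ t : ℝ) (hr : 0 < r)
    (hφ : φ ∈ Set.Ico 0 (1 - 1 / Real.exp 1))
    (ht : t = r * (1 + Real.log (1 - φ))) (k : ℕ) (hk : 1 ≤ k)
    (G : ℝ → ℝ)
    (hG : ∀ x, G x = if x < t then 0 else 1 - Real.exp (-(x - t) / r)) :
    ∫ x in (0:ℝ)..r, x * deriv (fun y => G y ^ k) x
      = r * (φ ^ k + Real.log (1 - φ)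
          + ∑ i ∈ Finset.range k, φ ^ (i + 1) / ((i : ℝ) + 1)) := by
  set g : ℝ → ℝ := fun y ↦ 1 - exp (-(y - t) / r)
  obtain ⟨h0t, htr⟩ : t ∈ Icc 0 r := ht ▸ mul_one_add_log_one_sub_mem_Icc hr hφ
  have h1φ : 0 < 1 - φ := by linarith [hφ.2, one_div_pos.mpr (exp_pos 1)]
  have hgr : g r = φ := by
    have : -(r - t) / r = log (1 - φ) := by rw [ht]; field_simp; ring
    simp only [g, this, exp_log h1φ]
    ring
  have hae : (fun x ↦ x * deriv (fun y ↦ G y ^ k) x)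
      =ᵐ[volume] (Ioi t).indicator fun x ↦ x * deriv (fun y ↦ g y ^ k) x := by
    filter_upwards [volume.ae_ne t] with x hx
    rw [indicator_mul_right, deriv_eq_indicator_of_eqOn (c := 0 ^ k) _ _ hx]
    · intro y hy
      simp only [hG, if_pos (mem_Iio.mp hy)]
    · intro y hy
      simp only [hG, if_neg (not_lt.mpr (mem_Ioi.mp hy).le), g]
  calc ∫ x in (0:ℝ)..r, x * deriv (fun y ↦ G y ^ k) x
      = ∫ x in (0:ℝ)..r, (Ioi t).indicator (fun x ↦ x * deriv (fun y ↦ g y ^ k) x) x :=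
        intervalIntegral.integral_congr_ae (hae.mono fun x hx _ ↦ hx)
    _ = ∫ x in t..r, x * deriv (fun y ↦ g y ^ k) x := intervalIntegral_indicator_Ioi h0t htr _
    _ = _ := integral_mul_deriv_pow_of_hasDerivAt hr.ne' (hasDerivAt_one_sub_exp t r) k t r
    _ = _ := by
      simp only [hgr, g, sub_self, neg_zero, zero_div, exp_zero, zero_pow (by omega : k ≠ 0),
        zero_pow (Nat.succ_ne_zero _), Finset.sum_const_zero]
      rw [ht]
      ring
end

section
/- Let α = 1 - 1/e, c = e/(e-1) = 1/α, and k ≥ 1. If m = ⌊log_c(2k)⌋ + 2, then for all x ∈ [0, α]: x^{m-1}(1-x) ≤ 1/(k+m). -/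
/-! With `n = ⌊log_c (2k)⌋₊`, the quantity `x^(m-1)(1-x) = x^n · x(1-x)` is at most `c^(-n)/4`
for `x ≤ 1/c`, while `k + m = k + n + 2 ≤ 4 c^n`: the floor gives `2k < c^(n+1)`, and Bernoulli's
inequality `c^n ≥ 1 + (c-1)n` absorbs `n + 2`. Only `4/3 ≤ c ≤ 2` matters, i.e. `2 ≤ e ≤ 4`. -/

open Real

lemma lt_pow_floor_logb_add_one {b : ℝ} (hb : 1 < b) (y : ℝ) :
    y < b ^ (⌊logb b y⌋₊ + 1) := by
  rcases le_or_gt y 0 with hy | hy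
  · exact hy.trans_lt (by positivity)
  · have h := (logb_lt_iff_lt_rpow hb hy).mp (Nat.lt_floor_add_one (logb b y))
    exact_mod_cast h

lemma pow_succ_mul_one_sub_le {c x : ℝ} (hx0 : 0 ≤ x) (hxc : x ≤ c⁻¹) (n : ℕ) :
    x ^ (n + 1) * (1 - x) ≤ (4 * c ^ n)⁻¹ :=
  calc x ^ (n + 1) * (1 - x) = x ^ n * (x * (1 - x)) := by ring
    _ ≤ x ^ n * 4⁻¹ := by gcongr; nlinarith [sq_nonneg (2 * x - 1)]
    _ ≤ c⁻¹ ^ n * 4⁻¹ := by gcongr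
    _ = (4 * c ^ n)⁻¹ := by rw [inv_pow, mul_inv, mul_comm]

lemma add_add_two_le_four_mul_pow {c k : ℝ} {n : ℕ} (hc : 4 / 3 ≤ c) (hc' : c ≤ 2)
    (hk : 2 * k < c ^ (n + 1)) : k + n + 2 ≤ 4 * c ^ n := by
  have hbernoulli : 1 + n * (c - 1) ≤ c ^ n := by
    simpa using one_add_mul_le_pow (a := c - 1) (by linarith) n
  rw [pow_succ] at hk
  nlinarith [pow_pos (by linarith : (0 : ℝ) < c) n]

theorem pow_mul_one_sub_le_inv_of_floor_logb {c : ℝ} (hc : 4 / 3 ≤ c) (hc' : c ≤ 2) (k : ℕ)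
    {x : ℝ} (hx0 : 0 ≤ x) (hxc : x ≤ c⁻¹) :
    x ^ (⌊logb c (2 * k)⌋₊ + 1) * (1 - x) ≤ ((k : ℝ) + (⌊logb c (2 * k)⌋₊ + 2 : ℕ))⁻¹ := by
  set n := ⌊logb c (2 * k)⌋₊
  have hsize : (k : ℝ) + (n + 2 : ℕ) ≤ 4 * c ^ n := by
    push_cast
    rw [← add_assoc]
    exact add_add_two_le_four_mul_pow hc hc' (lt_pow_floor_logb_add_one (by linarith) _)
  calc x ^ (n + 1) * (1 - x) ≤ (4 * c ^ n)⁻¹ := pow_succ_mul_one_sub_le hx0 hxc n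
    _ ≤ _ := inv_anti₀ (by positivity) hsize

theorem stmt_9_general (k : ℕ)
    (m : ℕ)
    (hm : m = ⌊Real.logb (Real.exp 1 / (Real.exp 1 - 1)) (2 * (k : ℝ))⌋₊ + 2) :
    ∀ x ∈ Set.Icc (0:ℝ) (1 - 1 / Real.exp 1),
      x ^ (m - 1) * (1 - x) ≤ 1 / ((k : ℝ) + m) := by
  rintro x ⟨hx0, hxα⟩
  have he2 := exp_one_gt_two
  have he4 : exp 1 < 4 := exp_one_lt_three.trans (by norm_num)
  set c := exp 1 / (exp 1 - 1)
  have hc : 4 / 3 ≤ c := by rw [le_div_iff₀ (by linarith)]; linarith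
  have hc' : c ≤ 2 := by rw [div_le_iff₀ (by linarith)]; linarith
  have hα : 1 - 1 / exp 1 = c⁻¹ := by rw [inv_div]; field_simp
  have hm1 : m - 1 = ⌊logb c (2 * k)⌋₊ + 1 := by omega
  rw [hm1, hm, one_div]
  exact pow_mul_one_sub_le_inv_of_floor_logb hc hc' k hx0 (hα ▸ hxα)

/-- With `m = ⌊log_c (2k)⌋ + 2` where `c = e/(e-1) = 1/α`, one has
`x^{m-1}(1-x) ≤ 1/(k+m)` for all `x ∈ [0, α]`, `α = 1 - 1/e`. -/
theorem stmt_9 (k : ℕ) (hk : 1 ≤ k)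
    (m : ℕ)
    (hm : m = ⌊Real.logb (Real.exp 1 / (Real.exp 1 - 1)) (2 * (k : ℝ))⌋₊ + 2) :
    ∀ x ∈ Set.Icc (0:ℝ) (1 - 1 / Real.exp 1),
      x ^ (m - 1) * (1 - x) ≤ 1 / ((k : ℝ) + m) :=
  stmt_9_general k m hm
end

section
/- Let α = 1 - 1/e, k ≥ 1 an integer, and m an integer with m ≥ log_{1/α}(2k) + 2. Define q(x) = x^{k+m} + ln(1-x) + Σ_{i=1}^{k} x^i / i. Then q(x) ≤ 0 for all x ∈ [0, α]. -/
/-!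
Since `-log (1 - x) = ∑_{i ≥ 1} x^i / i` has nonnegative terms on `[0, 1)`, it dominates
the partial sum up to `i = k + 1`, so it suffices that `x^(k+m) ≤ x^(k+1) / (k+1)`, that is,
`(k+1) x^(m-1) ≤ 1`. On `[0, α]` this follows from `α^(m-2) ≤ 1 / (2k)`, which is the
hypothesis on `m`.
-/

open Real

lemma log_one_sub_add_sum_range_nonpos (n : ℕ) {x : ℝ} (hx0 : 0 ≤ x) (hx1 : x < 1) :
    log (1 - x) + ∑ i ∈ Finset.range n, x ^ (i + 1) / ((i : ℝ) + 1) ≤ 0 := by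
  have hsum := sum_le_hasSum (Finset.range n) (fun i _ => by positivity) <|
    hasSum_pow_div_log_of_abs_lt_one (by rwa [abs_of_nonneg hx0])
  linarith

lemma pow_add_log_one_sub_add_sum_range_nonpos (k j : ℕ) {x : ℝ} (hx0 : 0 ≤ x) (hx1 : x < 1)
    (h : ((k : ℝ) + 1) * x ^ j ≤ 1) :
    x ^ (k + 1 + j) + log (1 - x)
      + ∑ i ∈ Finset.range k, x ^ (i + 1) / ((i : ℝ) + 1) ≤ 0 := by
  have hlog := log_one_sub_add_sum_range_nonpos (k + 1) hx0 hx1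
  rw [Finset.sum_range_succ] at hlog
  have hpow : x ^ (k + 1 + j) ≤ x ^ (k + 1) / ((k : ℝ) + 1) := by
    rw [pow_add, le_div_iff₀ (by positivity)]
    nlinarith [pow_nonneg hx0 (k + 1)]
  linarith

lemma mul_pow_le_one_of_logb_inv_le {a c : ℝ} {n : ℕ} (ha0 : 0 < a) (ha1 : a < 1) (hc : 0 < c)
    (h : logb a⁻¹ c ≤ n) : c * a ^ n ≤ 1 := by
  rw [logb_le_iff_le_rpow (one_lt_inv₀ ha0 |>.mpr ha1) hc, rpow_natCast, inv_pow] at h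
  rwa [← one_div, le_div_iff₀ (by positivity)] at h

/-- For `m ≥ log_{1/α}(2k) + 2` with `α = 1 - 1/e`, the function
`q(x) = x^{k+m} + ln(1-x) + Σ_{i=1}^k x^i/i` is non-positive on `[0, α]`. -/
theorem stmt_10 (k m : ℕ) (hk : 1 ≤ k)
    (hm : Real.logb (Real.exp 1 / (Real.exp 1 - 1)) (2 * (k : ℝ)) + 2 ≤ (m : ℝ)) :
    ∀ x ∈ Set.Icc (0:ℝ) (1 - 1 / Real.exp 1),
      x ^ (k + m) + Real.log (1 - x)
        + ∑ i ∈ Finset.range k, x ^ (i + 1) / ((i : ℝ) + 1) ≤ 0 := by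
  rintro x ⟨hx0, hxα⟩
  set α : ℝ := 1 - 1 / exp 1
  have hα0 : 0 < α := by simpa [α] using inv_lt_one_of_one_lt₀ (one_lt_exp_iff.mpr one_pos)
  have hα1 : α < 1 := by simp [α]; positivity
  have hbase : exp 1 / (exp 1 - 1) = α⁻¹ := by
    have : exp 1 - 1 ≠ 0 := (sub_pos.mpr (one_lt_exp_iff.mpr one_pos)).ne'
    simp only [α]
    field_simp
  have hk_real : (1 : ℝ) ≤ k := by exact_mod_cast hk
  have hlog_nonneg : 0 ≤ logb α⁻¹ (2 * k) :=
    logb_nonneg (one_lt_inv₀ hα0 |>.mpr hα1) (by linarith)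
  rw [hbase] at hm
  have hm_two : (2 : ℝ) ≤ m := by linarith
  obtain ⟨n, rfl⟩ : ∃ n, m = n + 2 := Nat.exists_eq_add_of_le' (by exact_mod_cast hm_two)
  have hαn : 2 * k * α ^ n ≤ 1 :=
    mul_pow_le_one_of_logb_inv_le hα0 hα1 (by positivity) (by push_cast at hm; linarith)
  have hxn : x ^ (n + 1) ≤ α ^ n :=
    (pow_le_pow_of_le_one hx0 (hxα.trans hα1.le) n.le_succ).trans (pow_le_pow_left₀ hx0 hxα n)
  rw [show k + (n + 2) = k + 1 + (n + 1) by omega]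
  exact pow_add_log_one_sub_add_sum_range_nonpos k (n + 1) hx0 (hxα.trans_lt hα1)
    (by nlinarith [pow_nonneg hα0.le n])
end

section
/- Let α = 1 - 1/e and k ≥ 1 an integer. Set m = ⌊log_{1/α}((k+1)(1-α))⌋ + 1. Define q(x) = x^{k+m} + ln(1-x) + Σ_{i=1}^{k} x^i / i. Then q(α) > 0. -/
/-!
Write `-log (1 - α) = ∑_{i ≥ 1} α^i / i`. After the first `k` terms, the tail is strictly
smaller than the geometric series `α^(k+1) / ((k+1)(1-α))`, and the choice of `m` makes
`α^(m-1) ≥ 1 / ((k+1)(1-α))`, so `α^(k+m)` dominates the tail.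
-/

open Real Finset

lemma pow_succ_add_div_le_mul_pow {α : ℝ} (hα : 0 ≤ α) (k n : ℕ) :
    α ^ (n + k + 1) / ((n + k : ℕ) + 1 : ℝ) ≤ α ^ (k + 1) / ((k : ℝ) + 1) * α ^ n := by
  rw [div_mul_eq_mul_div, ← pow_add, show k + 1 + n = n + k + 1 by ring]
  gcongr
  exact_mod_cast Nat.le_add_left k n

lemma pow_succ_add_div_lt_mul_pow {α : ℝ} (hα : 0 < α) (k : ℕ) {n : ℕ} (hn : 0 < n) :
    α ^ (n + k + 1) / ((n + k : ℕ) + 1 : ℝ) < α ^ (k + 1) / ((k : ℝ) + 1) * α ^ n := by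
  rw [div_mul_eq_mul_div, ← pow_add, show k + 1 + n = n + k + 1 by ring]
  gcongr
  exact_mod_cast Nat.lt_add_of_pos_left hn

theorem neg_log_one_sub_sub_sum_range_lt {α : ℝ} (hα₀ : 0 < α) (hα₁ : α < 1) (k : ℕ) :
    -log (1 - α) - ∑ i ∈ range k, α ^ (i + 1) / ((i : ℝ) + 1)
      < α ^ (k + 1) / (((k : ℝ) + 1) * (1 - α)) := by
  have hlog : HasSum (fun i : ℕ ↦ α ^ (i + 1) / ((i : ℝ) + 1)) (-log (1 - α)) :=
    hasSum_pow_div_log_of_abs_lt_one (by rwa [abs_of_pos hα₀])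
  have htail := (hasSum_nat_add_iff' k).mpr hlog
  have hgeom := (hasSum_geometric_of_lt_one hα₀.le hα₁).mul_left (α ^ (k + 1) / ((k : ℝ) + 1))
  rw [← div_eq_mul_inv, div_div] at hgeom
  refine hasSum_lt (fun n ↦ ?_) (pow_succ_add_div_lt_mul_pow hα₀ k one_pos) htail hgeom
  simpa only [Nat.cast_add] using pow_succ_add_div_le_mul_pow hα₀.le k n

lemma zpow_floor_logb_le {b c : ℝ} (hb : 1 < b) (hc : 0 < c) : b ^ ⌊logb b c⌋ ≤ c := by
  rw [← rpow_intCast, ← le_logb_iff_rpow_le hb hc]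
  exact Int.floor_le _

theorem pow_add_log_one_sub_add_sum_range_pos {α : ℝ} (hα₀ : 0 < α) (hα₁ : α < 1) (k : ℕ) :
    0 < α ^ ((k : ℤ) + (⌊logb α⁻¹ (((k : ℝ) + 1) * (1 - α))⌋ + 1))
      + log (1 - α) + ∑ i ∈ range k, α ^ (i + 1) / ((i : ℝ) + 1) := by
  set c := ((k : ℝ) + 1) * (1 - α)
  have hc : 0 < c := mul_pos (by positivity) (sub_pos.mpr hα₁)
  have hfloor : c⁻¹ ≤ α ^ ⌊logb α⁻¹ c⌋ := by
    rw [← inv_inv (α ^ _), ← inv_zpow]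
    exact inv_anti₀ (zpow_pos (inv_pos.mpr hα₀) _)
      (zpow_floor_logb_le ((one_lt_inv₀ hα₀).mpr hα₁) hc)
  have hdominate : α ^ (k + 1) / c ≤ α ^ ((k : ℤ) + (⌊logb α⁻¹ c⌋ + 1)) := by
    rw [show (k : ℤ) + (⌊logb α⁻¹ c⌋ + 1) = ((k + 1 : ℕ) : ℤ) + ⌊logb α⁻¹ c⌋ by push_cast; ring,
      zpow_add₀ hα₀.ne', zpow_natCast, div_eq_mul_inv]
    gcongr
  linarith [neg_log_one_sub_sub_sum_range_lt hα₀ hα₁ k]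

theorem stmt_11_general (k : ℕ)
    (m : ℤ)
    (hm : m = ⌊Real.logb (Real.exp 1 / (Real.exp 1 - 1))
        (((k : ℝ) + 1) * (1 - (1 - 1 / Real.exp 1)))⌋ + 1) :
    0 < (1 - 1 / Real.exp 1) ^ ((k : ℤ) + m)
        + Real.log (1 - (1 - 1 / Real.exp 1))
        + ∑ i ∈ Finset.range k, (1 - 1 / Real.exp 1) ^ (i + 1) / ((i : ℝ) + 1) := by
  have he : 1 < exp 1 := one_lt_exp_iff.mpr one_pos
  have hbase : exp 1 / (exp 1 - 1) = (1 - 1 / exp 1)⁻¹ := by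
    field_simp
  have hα₀ : 0 < 1 - 1 / exp 1 := by
    rw [sub_pos, div_lt_one (by positivity)]; exact he
  have hα₁ : 1 - 1 / exp 1 < 1 := by
    rw [sub_lt_self_iff]; positivity
  rw [hm, hbase]
  exact pow_add_log_one_sub_add_sum_range_pos hα₀ hα₁ k

/-- Lower bound witness: with `α = 1 - 1/e` and
`m = ⌊log_{1/α}((k+1)(1-α))⌋ + 1`, one has `q(α) > 0` where
`q(x) = x^{k+m} + ln(1-x) + Σ_{i=1}^k x^i/i`. -/
theorem stmt_11 (k : ℕ) (hk : 1 ≤ k)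
    (m : ℤ)
    (hm : m = ⌊Real.logb (Real.exp 1 / (Real.exp 1 - 1))
        (((k : ℝ) + 1) * (1 - (1 - 1 / Real.exp 1)))⌋ + 1) :
    0 < (1 - 1 / Real.exp 1) ^ ((k : ℤ) + m)
        + Real.log (1 - (1 - 1 / Real.exp 1))
        + ∑ i ∈ Finset.range k, (1 - 1 / Real.exp 1) ^ (i + 1) / ((i : ℝ) + 1) :=
  stmt_11_general k m hm
end

section
/- Let α = 1 - 1/e, let k ≥ 1, and let m ≥ log_{1/α}(2k) + 2 be an integer. Let D be any MHR distribution on [0,∞) with reserve price r (h_D(r) = 1/r) and φ = F_D(r). Then r(1 - φ^m) ≥ (1/φ^k)·∫_0^r x·k·F_D(x)^{k-1} f_D(x) dx, i.e., Gain_D - Loss_D ≥ 0. -/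
/-!
Integrating by parts, `∫₀ʳ x d(F^k) = r φ^k - ∫₀ʳ F^k`, so it suffices that `r φ^(m+k) ≤ ∫₀ʳ F^k`.
By monotonicity the hazard rate is at most `h r = 1/r` on `[0, r]`. Hence `∫₀ʳ h ≤ 1`, i.e.
`φ ≤ 1 - 1/e`, and `f = h (1 - F) ≤ 1/r`, so `∫₀ʳ F^k ≥ r ∫₀ʳ F^k f = r φ^(k+1)/(k+1)`.
The choice of `m` gives `φ^(m-2) ≤ (1 - 1/e)^(m-2) ≤ 1/(2k) ≤ 1/(k+1)`, which closes the gap.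
-/

open Real MeasureTheory Set intervalIntegral

section HazardRate

variable {f F h : ℝ → ℝ} {r x : ℝ}

lemma one_sub_cdf_pos (hF : ∀ x ∈ Ici (0:ℝ), F x = 1 - exp (-∫ t in (0:ℝ)..x, h t))
    (hx : 0 ≤ x) : 0 < 1 - F x := by
  rw [hF x hx, sub_sub_cancel]
  exact exp_pos _

lemma hazard_nonneg (hf0 : ∀ x, 0 ≤ f x) (hhaz : ∀ x ∈ Ici (0:ℝ), h x = f x / (1 - F x))
    (hF : ∀ x ∈ Ici (0:ℝ), F x = 1 - exp (-∫ t in (0:ℝ)..x, h t)) (hx : 0 ≤ x) : 0 ≤ h x := by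
  rw [hhaz x hx]
  exact div_nonneg (hf0 x) (one_sub_cdf_pos hF hx).le

lemma density_eq_hazard_mul (hhaz : ∀ x ∈ Ici (0:ℝ), h x = f x / (1 - F x))
    (hF : ∀ x ∈ Ici (0:ℝ), F x = 1 - exp (-∫ t in (0:ℝ)..x, h t)) (hx : 0 ≤ x) :
    f x = h x * (1 - F x) := by
  rw [hhaz x hx, div_mul_cancel₀ _ (one_sub_cdf_pos hF hx).ne']

lemma cdf_nonneg (hF : ∀ x ∈ Ici (0:ℝ), F x = 1 - exp (-∫ t in (0:ℝ)..x, h t))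
    (hh : ∀ x ∈ Ici (0:ℝ), 0 ≤ h x) (hx : 0 ≤ x) : 0 ≤ F x := by
  rw [hF x hx, sub_nonneg, exp_le_one_iff, neg_nonpos]
  exact integral_nonneg hx fun t ht => hh t ht.1

lemma cdf_le_one_sub_exp_neg_one (hF : ∀ x ∈ Ici (0:ℝ), F x = 1 - exp (-∫ t in (0:ℝ)..x, h t))
    (hinth : IntervalIntegrable h volume 0 r) (hr : 0 < r) (hhr : ∀ x ∈ Icc 0 r, h x ≤ 1 / r) :
    F r ≤ 1 - exp (-1) := by
  have hA : ∫ t in (0:ℝ)..r, h t ≤ 1 :=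
    calc ∫ t in (0:ℝ)..r, h t ≤ ∫ _ in (0:ℝ)..r, 1 / r :=
          integral_mono_on hr.le hinth intervalIntegrable_const hhr
      _ = 1 := by simp [hr.ne']
  rw [hF r hr.le]
  gcongr

lemma mul_density_le_one (hhaz : ∀ x ∈ Ici (0:ℝ), h x = f x / (1 - F x))
    (hF : ∀ x ∈ Ici (0:ℝ), F x = 1 - exp (-∫ t in (0:ℝ)..x, h t))
    (hh : ∀ x ∈ Ici (0:ℝ), 0 ≤ h x) (hr : 0 < r) (hhr : ∀ x ∈ Icc 0 r, h x ≤ 1 / r)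
    (hx : x ∈ Icc 0 r) : r * f x ≤ 1 := by
  have hrh : r * h x ≤ 1 := (le_div_iff₀' hr).1 (hhr x hx)
  have hF1 : 1 - F x ≤ 1 := by linarith [cdf_nonneg hF hh hx.1]
  calc r * f x = (r * h x) * (1 - F x) := by rw [density_eq_hazard_mul hhaz hF hx.1]; ring
    _ ≤ 1 * 1 := mul_le_mul hrh hF1 (one_sub_cdf_pos hF hx.1).le zero_le_one
    _ = 1 := one_mul 1

end HazardRate

section PowerIntegrals

variable {f F : ℝ → ℝ} {a b : ℝ} {k : ℕ}

lemma integral_mul_deriv_pow_eq (hab : a ≤ b) (hderiv : ∀ x ∈ Icc a b, HasDerivAt F (f x) x)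
    (hint : IntervalIntegrable (fun x => x * ((k : ℝ) * F x ^ (k - 1) * f x)) volume a b) :
    ∫ x in a..b, x * ((k : ℝ) * F x ^ (k - 1) * f x)
      = b * F b ^ k - a * F a ^ k - ∫ x in a..b, F x ^ k := by
  have hFk : IntervalIntegrable (fun x => F x ^ k) volume a b := by
    refine ContinuousOn.intervalIntegrable ?_
    rw [uIcc_of_le hab]
    exact fun x hx => ((hderiv x hx).continuousAt.pow k).continuousWithinAt
  have hFTC := integral_eq_sub_of_hasDerivAt
    (f := fun x => x * F x ^ k) (f' := fun x => F x ^ k + x * ((k : ℝ) * F x ^ (k - 1) * f x))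
    (fun x hx => by
      rw [uIcc_of_le hab] at hx
      exact ((hasDerivAt_id' x).fun_mul ((hderiv x hx).fun_pow k)).congr_deriv (by ring))
    (hFk.add hint)
  rw [integral_add hFk hint] at hFTC
  linarith

/-- A bound `c F' ≤ 1` lets `∫ F^k` dominate `c ∫ F^k F'`. -/
lemma sub_pow_succ_le_integral_pow {c : ℝ} (hab : a ≤ b)
    (hderiv : ∀ x ∈ Icc a b, HasDerivAt F (f x) x) (hF : ∀ x ∈ Icc a b, 0 ≤ F x)
    (hf : ∀ x ∈ Icc a b, c * f x ≤ 1) :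
    c * (F b ^ (k + 1) - F a ^ (k + 1)) / (k + 1) ≤ ∫ x in a..b, F x ^ k := by
  have hcont : ContinuousOn F (Icc a b) := fun x hx =>
    (hderiv x hx).continuousAt.continuousWithinAt
  have hG := sub_le_integral_of_hasDeriv_right_of_le hab
    (g := fun x => c * F x ^ (k + 1) / (k + 1)) (g' := fun x => F x ^ k * (c * f x))
    (φ := fun x => F x ^ k)
    ((hcont.pow _).const_smul c |>.div_const _)
    (fun x hx => by
      have hd := (((hderiv x (Ioo_subset_Icc_self hx)).fun_pow (k + 1)).const_mul c).div_const
        ((k : ℝ) + 1)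
      refine hd.hasDerivWithinAt.congr_deriv ?_
      push_cast
      field_simp)
    (hcont.pow k).integrableOn_Icc
    (fun x hx => mul_le_of_le_one_right (pow_nonneg (hF x (Ioo_subset_Icc_self hx)) k)
      (hf x (Ioo_subset_Icc_self hx)))
  convert hG using 1
  ring

end PowerIntegrals

lemma one_div_pow_mul_sub_le {φ r J : ℝ} {k m : ℕ} (hφ : 0 ≤ φ) (hr : 0 ≤ r)
    (hJ : r * φ ^ (m + k) ≤ J) : 1 / φ ^ k * (r * φ ^ k - J) ≤ r * (1 - φ ^ m) := by
  rcases (pow_nonneg hφ k).eq_or_lt with h0 | hpos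
  · obtain rfl : φ = 0 := (pow_eq_zero_iff'.1 h0.symm).1
    rw [← h0, div_zero, zero_mul]
    exact mul_nonneg hr (sub_nonneg.2 (pow_le_one₀ le_rfl zero_le_one))
  · have hmJ : r * φ ^ m ≤ J / φ ^ k := by
      rw [le_div_iff₀ hpos, mul_assoc, ← pow_add]
      exact hJ
    calc 1 / φ ^ k * (r * φ ^ k - J) = r - J / φ ^ k := by field_simp
      _ ≤ r - r * φ ^ m := by linarith
      _ = r * (1 - φ ^ m) := by ring

lemma pow_add_le_pow_succ_div {φ : ℝ} {k m : ℕ} (hk : 1 ≤ k) (hφ0 : 0 ≤ φ)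
    (hφ : φ ≤ 1 - exp (-1))
    (hm : logb (exp 1 / (exp 1 - 1)) (2 * (k : ℝ)) + 2 ≤ m) :
    φ ^ (m + k) ≤ φ ^ (k + 1) / (k + 1) := by
  set b := exp 1 / (exp 1 - 1)
  have he : 1 < exp 1 := one_lt_exp_iff.2 one_pos
  have hb : 1 < b := (one_lt_div (by linarith)).2 (by linarith)
  have hαb : 1 - exp (-1) = b⁻¹ := by
    rw [exp_neg, inv_div]
    field_simp
  have hk1 : (1 : ℝ) ≤ k := by exact_mod_cast hk
  have hlog := logb_nonneg hb (by linarith : (1 : ℝ) ≤ 2 * k)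
  obtain ⟨n, rfl⟩ : ∃ n, m = n + 2 := ⟨m - 2, by
    have : (2 : ℝ) ≤ m := by linarith
    have : 2 ≤ m := by exact_mod_cast this
    omega⟩
  have h2k : 2 * (k : ℝ) ≤ b ^ n := by
    rw [← rpow_natCast, ← logb_le_iff_le_rpow hb (by positivity)]
    push_cast at hm
    linarith
  have hφn : φ ^ n ≤ 1 / (k + 1) :=
    calc φ ^ n ≤ b⁻¹ ^ n := pow_le_pow_left₀ hφ0 (hφ.trans_eq hαb) n
      _ = 1 / b ^ n := by rw [inv_pow, one_div]
      _ ≤ 1 / (2 * k) := one_div_le_one_div_of_le (by positivity) h2k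
      _ ≤ 1 / (k + 1) := one_div_le_one_div_of_le (by positivity) (by linarith)
  have hφ1 : φ ≤ 1 := hφ.trans (by linarith [exp_pos (-1)])
  calc φ ^ (n + 2 + k) = φ ^ n * φ * φ ^ (k + 1) := by ring
    _ ≤ 1 / (k + 1) * 1 * φ ^ (k + 1) := by gcongr
    _ = φ ^ (k + 1) / (k + 1) := by ring

/-- Single-item upper bound: for any MHR distribution with cdf `F`, density `f`,
hazard rate `h`, reserve price `r` (where `h r = 1/r`) and `φ = F r`, if
`m ≥ log_{1/α}(2k) + 2` (with `α = 1 - 1/e`), then `Gain - Loss ≥ 0`, i.e.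
`r(1 - φ^m) ≥ (1/φ^k)·∫_0^r x·k·F(x)^{k-1} f(x) dx`. -/
theorem stmt_15 (k m : ℕ) (hk : 1 ≤ k)
    (hm : Real.logb (Real.exp 1 / (Real.exp 1 - 1)) (2 * (k : ℝ)) + 2 ≤ (m : ℝ))
    (f F h : ℝ → ℝ)
    (hf0 : ∀ x, 0 ≤ f x)
    (hhaz : ∀ x ∈ Set.Ici (0:ℝ), h x = f x / (1 - F x))
    (hmono : MonotoneOn h (Set.Ici 0))
    (hF : ∀ x ∈ Set.Ici (0:ℝ), F x = 1 - Real.exp (-∫ t in (0:ℝ)..x, h t))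
    (hinth : ∀ x : ℝ, IntervalIntegrable h volume 0 x)
    (r : ℝ) (hr : 0 < r) (hres : h r = 1 / r)
    (hderiv : ∀ x ∈ Set.Icc (0:ℝ) r, HasDerivAt F (f x) x)
    (hint : IntervalIntegrable (fun x => x * ((k : ℝ) * F x ^ (k - 1) * f x)) volume 0 r) :
    (1 / (F r) ^ k) * ∫ x in (0:ℝ)..r, x * ((k : ℝ) * F x ^ (k - 1) * f x)
      ≤ r * (1 - (F r) ^ m) := by
  have hh0 : ∀ x ∈ Ici (0:ℝ), 0 ≤ h x := fun x hx => hazard_nonneg hf0 hhaz hF hx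
  have hhr : ∀ x ∈ Icc (0:ℝ) r, h x ≤ 1 / r := fun x hx => hres ▸ hmono hx.1 hr.le hx.2
  have hφ0 : 0 ≤ F r := cdf_nonneg hF hh0 hr.le
  have hF0 : F 0 = 0 := by simpa using hF 0 self_mem_Ici
  have hJ : r * F r ^ (k + 1) / (k + 1) ≤ ∫ x in (0:ℝ)..r, F x ^ k := by
    simpa [hF0] using sub_pow_succ_le_integral_pow hr.le hderiv
      (fun x hx => cdf_nonneg hF hh0 hx.1) (fun x hx => mul_density_le_one hhaz hF hh0 hr hhr hx)
  rw [integral_mul_deriv_pow_eq hr.le hderiv hint, zero_mul, sub_zero]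
  refine one_div_pow_mul_sub_le hφ0 hr.le ?_
  calc r * F r ^ (m + k) ≤ r * (F r ^ (k + 1) / (k + 1)) :=
        mul_le_mul_of_nonneg_left (pow_add_le_pow_succ_div hk hφ0
          (cdf_le_one_sub_exp_neg_one hF (hinth r) hr hhr) hm) hr.le
    _ ≤ ∫ x in (0:ℝ)..r, F x ^ k := by rwa [← mul_div_assoc]
end

section
/- Let 0 < φ ≤ 1 - 1/e, t' ≥ 1 and ε > 0. There exists M such that for all m ≥ M, if s ≥ t' + (1+ε)·t'·log m + log t', then for every integer j with 0 ≤ j ≤ t'-1: C(m+s, j)·φ^{m+s-j}·(1-φ)^j·(t'-j) ≤ φ^m, where C(n,j) is the binomial coefficient. -/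
/-!
Put `b = e / (e - 1)`, so that `φ ≤ 1 / b`. Since `C(m+s, j) ≤ (m+s)^t'`, `(1-φ)^j ≤ 1`,
`t' - j ≤ t'` and `φ^(m+s-j) ≤ φ^m φ^(s-t')`, it suffices that `(m+s)^t' t' ≤ b^(s-t')`, i.e.
`t' log (m+s) + log t' ≤ (s - t') log b`. For `s ≤ m` we have
`log (m+s) ≤ log 2 + log m ≤ (1 + ε) log m` once `m` is large, and the hypothesis on `s` is exactly
what is needed. For `s > m` the right side grows linearly in `s` and the left side only
logarithmically, so the inequality holds as soon as `m`, hence `s`, is large.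
-/

open Real Filter Asymptotics

lemma inv_exp_div_exp_sub_one : (exp 1 / (exp 1 - 1))⁻¹ = 1 - 1 / exp 1 := by
  field_simp

lemma one_lt_exp_div_exp_sub_one : 1 < exp 1 / (exp 1 - 1) := by
  have he : 1 < exp 1 := one_lt_exp_iff.2 one_pos
  rw [one_lt_div (by linarith)]
  linarith

lemma eventually_mul_log_add_le (A B : ℝ) {c : ℝ} (hc : 0 < c) :
    ∀ᶠ x : ℝ in atTop, A * log x + B ≤ c * x := by
  have hbound :=
    ((isLittleO_log_id_atTop.const_mul_left A).add (isLittleO_const_id_atTop B)).bound hc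
  filter_upwards [hbound, eventually_ge_atTop 0] with x hx hx0
  rw [Real.norm_eq_abs, Real.norm_eq_abs, id, abs_of_nonneg hx0] at hx
  exact (le_abs_self _).trans hx

lemma eventually_mul_log_add_le_of_logb_le {b ε t : ℝ} (hb : 1 < b) (hε : 0 < ε) (ht : 0 ≤ t) :
    ∀ᶠ m : ℕ in atTop, ∀ s : ℕ, t + (1 + ε) * t * logb b m + logb b t ≤ s →
      t * log (m + s) + log t ≤ (s - t) * log b := by
  have hL : 0 < log b := log_pos hb
  have hlarge : ∀ᶠ m : ℕ in atTop, ∀ s : ℕ, m ≤ s →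
      t * log (2 * s) + log t + t * log b ≤ s * log b := by
    refine eventually_forall_ge_atTop.2
      (tendsto_natCast_atTop_atTop.eventually (p := fun x : ℝ =>
        t * log (2 * x) + log t + t * log b ≤ x * log b) ?_)
    filter_upwards [eventually_mul_log_add_le t (t * log 2 + log t + t * log b) hL,
      eventually_gt_atTop 0] with x hx hx0
    rw [log_mul two_ne_zero hx0.ne']
    linarith
  have hlogm : ∀ᶠ m : ℕ in atTop, log 2 / ε ≤ log m :=
    (tendsto_log_atTop.comp tendsto_natCast_atTop_atTop).eventually_ge_atTop _
  filter_upwards [hlarge, hlogm, eventually_gt_atTop 0] with m hlarge hlogm hm s hs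
  have hm : (0 : ℝ) < m := Nat.cast_pos.2 hm
  rcases le_or_gt s m with hsm | hms
  · have hs : t * log b + (1 + ε) * t * log m + log t ≤ s * log b := by
      have := mul_le_mul_of_nonneg_right hs hL.le
      simp only [logb, add_mul, div_mul_cancel₀ _ hL.ne', mul_assoc] at this
      linarith
    have h2 : log 2 ≤ ε * log m := by rwa [div_le_iff₀' hε] at hlogm
    have hsum : log (m + s) ≤ log 2 + log m := by
      rw [← log_mul two_ne_zero hm.ne']
      gcongr
      linarith [(Nat.cast_le (α := ℝ)).2 hsm]
    nlinarith
  · have hs : (0 : ℝ) < s := by exact_mod_cast Nat.zero_lt_of_lt hms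
    have hsum : log (m + s) ≤ log (2 * s) := by
      gcongr
      linarith [(Nat.cast_lt (α := ℝ)).2 hms]
    nlinarith [hlarge s hms.le]

lemma pow_mul_le_pow_sub_of_log_le {x b : ℝ} {s t : ℕ} (hx : 0 < x) (hb : 0 < b) (ht : 0 < t)
    (hts : t ≤ s) (h : t * log x + log t ≤ (s - t) * log b) : x ^ t * t ≤ b ^ (s - t) := by
  rwa [← log_le_log_iff (by positivity) (by positivity), log_mul (by positivity) (by positivity),
    log_pow, log_pow, Nat.cast_sub hts]

lemma choose_mul_pow_le_pow_of_pow_le {φ b : ℝ} (hφ0 : 0 ≤ φ) (hφb : φ ≤ b⁻¹) (hb : 1 ≤ b)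
    {m s t j : ℕ} (hts : t ≤ s) (hjt : j < t) (h : ((m : ℝ) + s) ^ t * t ≤ b ^ (s - t)) :
    ((m + s).choose j : ℝ) * φ ^ (m + s - j) * (1 - φ) ^ j * ((t : ℝ) - j) ≤ φ ^ m := by
  have hφ1 : φ ≤ 1 := hφb.trans (inv_le_one_of_one_le₀ hb)
  have hφb' : φ * b ≤ 1 := by
    simpa [inv_mul_cancel₀ (by positivity : b ≠ 0)] using
      mul_le_mul_of_nonneg_right hφb (by positivity : 0 ≤ b)
  have hchoose : ((m + s).choose j : ℝ) ≤ ((m : ℝ) + s) ^ t := by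
    calc ((m + s).choose j : ℝ) ≤ ((m : ℝ) + s) ^ j := by exact_mod_cast Nat.choose_le_pow _ _
      _ ≤ ((m : ℝ) + s) ^ t := by
        have : (1 : ℝ) ≤ m + s := by norm_cast; omega
        exact pow_le_pow_right₀ this hjt.le
  have hφpow : φ ^ (m + s - j) ≤ φ ^ (m + (s - t)) := pow_le_pow_of_le_one hφ0 hφ1 (by omega)
  have h1φ : (1 - φ) ^ j ≤ 1 := pow_le_one₀ (by linarith) (by linarith)
  have htj : (t : ℝ) - j ≤ t := by linarith [(j.cast_nonneg : (0 : ℝ) ≤ j)]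
  have htj0 : (0 : ℝ) ≤ t - j := by linarith [(Nat.cast_lt (α := ℝ)).2 hjt]
  calc ((m + s).choose j : ℝ) * φ ^ (m + s - j) * (1 - φ) ^ j * ((t : ℝ) - j)
      ≤ ((m : ℝ) + s) ^ t * φ ^ (m + (s - t)) * 1 * t := by gcongr
    _ = φ ^ m * (((m : ℝ) + s) ^ t * t * φ ^ (s - t)) := by ring
    _ ≤ φ ^ m * (b ^ (s - t) * φ ^ (s - t)) := by gcongr
    _ = φ ^ m * (φ * b) ^ (s - t) := by ring
    _ ≤ φ ^ m := mul_le_of_le_one_right (by positivity) (pow_le_one₀ (by positivity) hφb')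

/-- Multi-item bound on binomial tail terms: for `s ≥ t' + (1+ε) t' log m + log t'`
(logs to base `e/(e-1)`) and `m` large enough,
`C(m+s, j)·φ^{m+s-j}·(1-φ)^j·(t'-j) ≤ φ^m` for every `0 ≤ j ≤ t'-1`. -/
theorem stmt_16 (φ : ℝ) (hφ0 : 0 < φ) (hφ : φ ≤ 1 - 1 / Real.exp 1)
    (t' : ℕ) (ht' : 1 ≤ t') (ε : ℝ) (hε : 0 < ε) :
    ∃ M : ℕ, ∀ m : ℕ, M ≤ m → ∀ s : ℕ,
      (t' : ℝ) + (1 + ε) * t' * Real.logb (Real.exp 1 / (Real.exp 1 - 1)) m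
          + Real.logb (Real.exp 1 / (Real.exp 1 - 1)) t' ≤ (s : ℝ) →
      ∀ j : ℕ, j ≤ t' - 1 →
        ((m + s).choose j : ℝ) * φ ^ (m + s - j) * (1 - φ) ^ j * ((t' : ℝ) - j)
          ≤ φ ^ m := by
  have hb := one_lt_exp_div_exp_sub_one
  obtain ⟨M, hM⟩ := eventually_atTop.1
    ((eventually_mul_log_add_le_of_logb_le hb hε t'.cast_nonneg).and (eventually_ge_atTop 1))
  refine ⟨M, fun m hm s hs j hj => ?_⟩
  obtain ⟨hlog, hm1⟩ := hM m hm
  have hts : t' ≤ s := by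
    have hm : 0 ≤ logb (exp 1 / (exp 1 - 1)) m := logb_nonneg hb (by exact_mod_cast hm1)
    have ht : 0 ≤ logb (exp 1 / (exp 1 - 1)) t' := logb_nonneg hb (by exact_mod_cast ht')
    have := mul_nonneg (mul_nonneg (by linarith : (0 : ℝ) ≤ 1 + ε) t'.cast_nonneg) hm
    exact_mod_cast (by linarith : (t' : ℝ) ≤ s)
  exact choose_mul_pow_le_pow_of_pow_le hφ0.le (by rwa [inv_exp_div_exp_sub_one]) hb.le hts
    (by omega) (pow_mul_le_pow_sub_of_log_le (by positivity) (by positivity) ht' hts (hlog s hs))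
end
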